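/- Let J be a Jordan algebra all of whose derivations X admit a representation X(z) = Σᵢ [xᵢ, z, yᵢ] by associators. Suppose M is a Jordan module over J. Define ∇_X(m) = Σᵢ [xᵢ, m, yᵢ] computed in the split null extension J ⊕ M (identifying m with (0,m)). Then ∇_X satisfies the connection Leibniz rule: ∇_X(zm) = X(z)m + z∇_X(m) for all z ∈ J, m ∈ M. -/
import Mathlib


/-- The product of the split null extension `J ⊕ M`. -/
def splitMul {J M : Type*} [NonUnitalNonAssocRing J] [AddCommGroup M]
    [Module ℝ J] [Module ℝ M]
    (L : J →ₗ[ℝ] M →ₗ[ℝ] M) (p q : J × M) : J × M :=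
  (p.1 * q.1, L p.1 q.2 + L q.1 p.2)

lemma polar4 {A : Type*} [AddCommGroup A] [Module ℝ A] (mul : A → A → A)
    (addl : ∀ a b c : A, mul (a+b) c = mul a c + mul b c)
    (addr : ∀ a b c : A, mul a (b+c) = mul a b + mul a c)
    (comm : ∀ a b : A, mul a b = mul b a)
    (jordan : ∀ a b : A, mul a (mul b (mul a a)) = mul (mul a b) (mul a a))
    (a b c y : A) :
    mul a (mul y (mul b c)) + mul b (mul y (mul a c)) + mul c (mul y (mul a b)) =
      mul (mul a y) (mul b c) + mul (mul b y) (mul a c) + mul (mul c y) (mul a b) := by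
  set EL := mul a (mul y (mul b c)) + mul b (mul y (mul a c)) + mul c (mul y (mul a b)) with hEL
  set ER := mul (mul a y) (mul b c) + mul (mul b y) (mul a c) + mul (mul c y) (mul a b) with hER
  have key :
      (mul (a+b+c) (mul y (mul (a+b+c) (a+b+c))) - mul (mul (a+b+c) y) (mul (a+b+c) (a+b+c)))
      - (mul (a+b) (mul y (mul (a+b) (a+b))) - mul (mul (a+b) y) (mul (a+b) (a+b)))
      - (mul (a+c) (mul y (mul (a+c) (a+c))) - mul (mul (a+c) y) (mul (a+c) (a+c)))
      - (mul (b+c) (mul y (mul (b+c) (b+c))) - mul (mul (b+c) y) (mul (b+c) (b+c)))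
      + (mul a (mul y (mul a a)) - mul (mul a y) (mul a a))
      + (mul b (mul y (mul b b)) - mul (mul b y) (mul b b))
      + (mul c (mul y (mul c c)) - mul (mul c y) (mul c c))
      = (EL + EL) - (ER + ER) := by
    rw [hEL, hER]
    simp only [addl, addr, comm b a, comm c a, comm c b]
    abel
  have z0 : (EL + EL) - (ER + ER) = 0 := by
    rw [← key]
    simp only [jordan]
    abel
  have h2 : (2:ℝ) • EL = (2:ℝ) • ER := by
    have := sub_eq_zero.mp z0
    rw [two_smul, two_smul]
    exact this
  have := congrArg (fun v => (2:ℝ)⁻¹ • v) h2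
  simpa [smul_smul] using this


/-- Let `J` be a Jordan algebra and `X` a derivation of `J` represented by
associators: `X(z) = Σᵢ [xᵢ, z, yᵢ]`. Let `M` be a Jordan module over `J`
(so that the split null extension `J ⊕ M` is a Jordan algebra). Then
`∇_X(m) = Σᵢ [(xᵢ,0), (0,m), (yᵢ,0)]` (computed in `J ⊕ M` and identified
with an element of `M`) satisfies the connection Leibniz rule
`∇_X(zm) = X(z)m + z∇_X(m)`. -/
theorem inner_derivation_connection_leibniz {J M : Type*}
    [NonUnitalNonAssocRing J] [AddCommGroup M]
    [Module ℝ J] [Module ℝ M] [SMulCommClass ℝ J J] [IsScalarTower ℝ J J]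
    (hcomm : ∀ x y : J, x * y = y * x)
    (hjordan : ∀ x y : J, x * (y * (x * x)) = (x * y) * (x * x))
    (L : J →ₗ[ℝ] M →ₗ[ℝ] M)
    (hsplit : ∀ a b : J × M,
      splitMul L a (splitMul L b (splitMul L a a)) =
        splitMul L (splitMul L a b) (splitMul L a a))
    (k : ℕ) (x y : Fin k → J) (X : J →ₗ[ℝ] J)
    (hX : ∀ z : J, X z = ∑ i, ((x i * z) * y i - x i * (z * y i))) :
    ∀ (z : J) (m : M),
      (∑ i, (L (y i) (L (x i) (L z m)) - L (x i) (L (y i) (L z m)))) =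
        L (X z) m +
          L z (∑ i, (L (y i) (L (x i) m) - L (x i) (L (y i) m))) := by
  intro z m
  have addl : ∀ a b c : J × M, splitMul L (a+b) c = splitMul L a c + splitMul L b c := by
    intro a b c
    simp only [splitMul, Prod.fst_add, Prod.snd_add, add_mul, map_add, LinearMap.add_apply,
      Prod.mk_add_mk]
    exact Prod.ext rfl (by abel)
  have addr : ∀ a b c : J × M, splitMul L a (b+c) = splitMul L a b + splitMul L a c := by
    intro a b c
    simp only [splitMul, Prod.fst_add, Prod.snd_add, mul_add, map_add, LinearMap.add_apply,
      Prod.mk_add_mk]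
    exact Prod.ext rfl (by abel)
  have comm : ∀ a b : J × M, splitMul L a b = splitMul L b a := by
    intro a b
    simp only [splitMul, hcomm a.1 b.1, add_comm]
  have E := polar4 (splitMul L) addl addr comm hsplit
  have key : ∀ i, L (y i) (L (x i) (L z m)) - L (x i) (L (y i) (L z m)) =
      L ((x i * z) * y i - x i * (z * y i)) m +
        (L z (L (y i) (L (x i) m)) - L z (L (x i) (L (y i) m))) := by
    intro i
    have I1 := congrArg Prod.snd (E (y i, (0:M)) (z, 0) (0, m) (x i, 0))
    have I2 := congrArg Prod.snd (E (x i, (0:M)) (z, 0) (0, m) (y i, 0))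
    simp only [splitMul, mul_zero, zero_mul, map_zero, LinearMap.zero_apply, add_zero,
      zero_add, Prod.snd_add] at I1 I2
    have h1 : x i * (z * y i) = x i * (y i * z) := by rw [hcomm z (y i)]
    have h2 : (x i * z) * y i = y i * (x i * z) := hcomm _ _
    have h3 : z * x i = x i * z := hcomm _ _
    have h4 : z * y i = y i * z := hcomm _ _
    have h5 : y i * x i = x i * y i := hcomm _ _
    rw [map_sub, LinearMap.sub_apply, h1, h2]
    simp only [h3, h4, h5] at I1 I2
    linear_combination (norm := abel) I1 - I2
  calc ∑ i, (L (y i) (L (x i) (L z m)) - L (x i) (L (y i) (L z m)))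
      = ∑ i, (L ((x i * z) * y i - x i * (z * y i)) m +
          (L z (L (y i) (L (x i) m)) - L z (L (x i) (L (y i) m)))) :=
        Finset.sum_congr rfl fun i _ => key i
    _ = _ := by
        rw [Finset.sum_add_distrib]
        congr 1
        · rw [hX, map_sum, LinearMap.sum_apply]
        · rw [map_sum]
          exact Finset.sum_congr rfl fun i _ => (map_sub (L z) _ _).symm
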